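/- For the Cartan Lie algebra with algebraic differential d_0 as above, the subspace E_0^2 := ker d_0 ∩ (range d_0)^⊥ of Λ²(𝔤*) (orthogonal complement taken with respect to the inner product making the θ_i∧θ_j orthonormal) is 3-dimensional and is spanned by θ_1∧θ_4, θ_2∧θ_4 + θ_1∧θ_5, and θ_2∧θ_5. -/

import Mathlib

noncomputable section

/-- Index set for the basis `θ_i ∧ θ_j`, `i < j`, of `Λ²(𝔤*)`. -/
abbrev Pair2 : Type := {ij : Fin 5 × Fin 5 // ij.1 < ij.2}

/-- Index set for the basis `θ_i ∧ θ_j ∧ θ_k`, `i < j < k`, of `Λ³(𝔤*)`. -/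
abbrev Triple3 : Type := {t : Fin 5 × Fin 5 × Fin 5 // t.1 < t.2.1 ∧ t.2.1 < t.2.2}

/-- The matrix of `d₀ : Λ¹ → Λ²` for the Cartan Lie algebra:
`d₀θ₃ = -θ₁∧θ₂`, `d₀θ₄ = -θ₁∧θ₃`, `d₀θ₅ = -θ₂∧θ₃`, `d₀θ₁ = d₀θ₂ = 0`. -/
def d01Mat : Matrix Pair2 (Fin 5) ℝ := fun p i =>
  if p.1 = ((0 : Fin 5), (1 : Fin 5)) ∧ i = 2 then -1
  else if p.1 = ((0 : Fin 5), (2 : Fin 5)) ∧ i = 3 then -1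
  else if p.1 = ((1 : Fin 5), (2 : Fin 5)) ∧ i = 4 then -1
  else 0

/-- The matrix of `d₀ : Λ² → Λ³` for the Cartan Lie algebra (obtained by
extending `d₀` as an antiderivation). -/
def d02Mat : Matrix Triple3 Pair2 ℝ := fun t p =>
  if t.1 = ((0 : Fin 5), (1 : Fin 5), (2 : Fin 5)) ∧ p.1 = ((0 : Fin 5), (4 : Fin 5)) then 1
  else if t.1 = ((0 : Fin 5), (1 : Fin 5), (2 : Fin 5)) ∧ p.1 = ((1 : Fin 5), (3 : Fin 5)) then -1
  else if t.1 = ((0 : Fin 5), (1 : Fin 5), (3 : Fin 5)) ∧ p.1 = ((2 : Fin 5), (3 : Fin 5)) then -1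
  else if t.1 = ((0 : Fin 5), (1 : Fin 5), (4 : Fin 5)) ∧ p.1 = ((2 : Fin 5), (4 : Fin 5)) then -1
  else if t.1 = ((0 : Fin 5), (2 : Fin 5), (4 : Fin 5)) ∧ p.1 = ((3 : Fin 5), (4 : Fin 5)) then -1
  else if t.1 = ((1 : Fin 5), (2 : Fin 5), (3 : Fin 5)) ∧ p.1 = ((3 : Fin 5), (4 : Fin 5)) then 1
  else 0

/-- `d₀ : Λ¹ → Λ²` as a linear map between Euclidean coordinate spaces. -/
noncomputable def d01 : EuclideanSpace ℝ (Fin 5) →ₗ[ℝ] EuclideanSpace ℝ Pair2 :=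
  Matrix.toEuclideanLin d01Mat

/-- `d₀ : Λ² → Λ³` as a linear map between Euclidean coordinate spaces. -/
noncomputable def d02 : EuclideanSpace ℝ Pair2 →ₗ[ℝ] EuclideanSpace ℝ Triple3 :=
  Matrix.toEuclideanLin d02Mat

/-- The coordinate vector of `θ_i ∧ θ_j`. -/
noncomputable def wdg (i j : Fin 5) : EuclideanSpace ℝ Pair2 :=
  WithLp.toLp 2 (fun p : Pair2 => if p.1 = (i, j) then 1 else 0)

/-! Since `(range d₀)ᗮ = ker d₀*` and the adjoint of a matrix map is the transposed matrix,
`E₀²` is cut out by linear equations in the ten coordinates `v_ij` of `v ∈ Λ²` (indices are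
0-based below, so `θ₁ ∧ θ₄` is `wdg 0 3`). Orthogonality to `d₀θ₃, d₀θ₄, d₀θ₅` kills
`v₀₁, v₀₂, v₁₂`, and `d₀v = 0` reads `v₀₄ = v₁₃`, `v₂₃ = v₂₄ = v₃₄ = 0`; the free coordinates
`v₀₃, v₀₄, v₁₄` are those of the three generators. -/

open Matrix

def pair (i j : Fin 5) (h : i < j := by decide) : Pair2 := ⟨(i, j), h⟩

def triple (i j k : Fin 5) (h : i < j ∧ j < k := by decide) : Triple3 := ⟨(i, j, k), h⟩

@[simp] lemma pair_val (i j : Fin 5) (h : i < j) : (pair i j h).1 = (i, j) := rfl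

@[simp] lemma triple_val (i j k : Fin 5) (h : i < j ∧ j < k) :
    (triple i j k h).1 = (i, j, k) := rfl

lemma univ_pair2 : (Finset.univ : Finset Pair2) =
    {pair 0 1, pair 0 2, pair 0 3, pair 0 4, pair 1 2, pair 1 3, pair 1 4, pair 2 3, pair 2 4,
      pair 3 4} := by
  decide

lemma univ_triple3 : (Finset.univ : Finset Triple3) =
    {triple 0 1 2, triple 0 1 3, triple 0 1 4, triple 0 2 3, triple 0 2 4, triple 0 3 4,
      triple 1 2 3, triple 1 2 4, triple 1 3 4, triple 2 3 4} := by
  decide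

lemma sum_pair2 (f : Pair2 → ℝ) :
    ∑ p, f p = f (pair 0 1) + f (pair 0 2) + f (pair 0 3) + f (pair 0 4) + f (pair 1 2)
      + f (pair 1 3) + f (pair 1 4) + f (pair 2 3) + f (pair 2 4) + f (pair 3 4) := by
  rw [univ_pair2]
  repeat rw [Finset.sum_insert (by decide)]
  rw [Finset.sum_singleton]
  ring

lemma forall_pair2 (P : Pair2 → Prop) :
    (∀ p, P p) ↔ P (pair 0 1) ∧ P (pair 0 2) ∧ P (pair 0 3) ∧ P (pair 0 4) ∧ P (pair 1 2) ∧
      P (pair 1 3) ∧ P (pair 1 4) ∧ P (pair 2 3) ∧ P (pair 2 4) ∧ P (pair 3 4) := by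
  rw [show (∀ p, P p) ↔ ∀ p ∈ Finset.univ, P p by simp, univ_pair2]
  simp only [Finset.forall_mem_insert, Finset.mem_singleton, forall_eq]

lemma forall_triple3 (P : Triple3 → Prop) :
    (∀ t, P t) ↔ P (triple 0 1 2) ∧ P (triple 0 1 3) ∧ P (triple 0 1 4) ∧ P (triple 0 2 3) ∧
      P (triple 0 2 4) ∧ P (triple 0 3 4) ∧ P (triple 1 2 3) ∧ P (triple 1 2 4) ∧
      P (triple 1 3 4) ∧ P (triple 2 3 4) := by
  rw [show (∀ t, P t) ↔ ∀ t ∈ Finset.univ, P t by simp, univ_triple3]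
  simp only [Finset.forall_mem_insert, Finset.mem_singleton, forall_eq]

lemma Matrix.mem_ker_toEuclideanLin_iff {𝕜 m n : Type*} [RCLike 𝕜] [Fintype n]
    [DecidableEq n] (A : Matrix m n 𝕜) (v : EuclideanSpace 𝕜 n) :
    v ∈ LinearMap.ker (toEuclideanLin A) ↔ ∀ i, ∑ j, A i j * v j = 0 := by
  simp [LinearMap.mem_ker, toLpLin_apply, funext_iff, mulVec, dotProduct]

lemma orthogonal_range_d01 :
    (LinearMap.range d01)ᗮ = LinearMap.ker (toEuclideanLin d01Matᵀ) := by
  rw [LinearMap.orthogonal_range, d01, ← toEuclideanLin_conjTranspose_eq_adjoint,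
    conjTranspose_eq_transpose_of_trivial]

lemma mem_orthogonal_range_d01_iff (v : EuclideanSpace ℝ Pair2) :
    v ∈ (LinearMap.range d01)ᗮ ↔ v (pair 0 1) = 0 ∧ v (pair 0 2) = 0 ∧ v (pair 1 2) = 0 := by
  rw [orthogonal_range_d01, mem_ker_toEuclideanLin_iff]
  simp [sum_pair2, d01Mat, Fin.forall_fin_succ]

lemma mem_ker_d02_iff (v : EuclideanSpace ℝ Pair2) :
    v ∈ LinearMap.ker d02 ↔
      v (pair 0 4) = v (pair 1 3) ∧ v (pair 2 3) = 0 ∧ v (pair 2 4) = 0 ∧ v (pair 3 4) = 0 := by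
  rw [d02, mem_ker_toEuclideanLin_iff, forall_triple3]
  simp [sum_pair2, d02Mat, ← sub_eq_add_neg, sub_eq_zero]

lemma ker_d02_inf_orthogonal_range_d01_eq_span :
    LinearMap.ker d02 ⊓ (LinearMap.range d01)ᗮ
      = Submodule.span ℝ {wdg 0 3, wdg 1 3 + wdg 0 4, wdg 1 4} := by
  ext v
  rw [Submodule.mem_inf, mem_ker_d02_iff, mem_orthogonal_range_d01_iff,
    Submodule.mem_span_triple]
  constructor
  · rintro ⟨⟨h04, h23, h24, h34⟩, h01, h02, h12⟩
    refine ⟨v (pair 0 3), v (pair 0 4), v (pair 1 4), ?_⟩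
    rw [WithLp.ext_iff, funext_iff, forall_pair2]
    simp [wdg, *]
  · rintro ⟨a, b, c, rfl⟩
    simp [wdg]

lemma linearIndependent_rumin_generators :
    LinearIndependent ℝ ![wdg 0 3, wdg 1 3 + wdg 0 4, wdg 1 4] := by
  rw [Fintype.linearIndependent_iff]
  intro g hg
  have h03 := congr($hg (pair 0 3))
  have h04 := congr($hg (pair 0 4))
  have h14 := congr($hg (pair 1 4))
  simp [Fin.sum_univ_three, wdg] at h03 h04 h14
  intro i
  fin_cases i <;> assumption

/-- The Rumin space `E₀² = ker d₀ ∩ (range d₀)^⊥` of the Cartan group is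
3-dimensional, spanned by `θ₁∧θ₄`, `θ₂∧θ₄ + θ₁∧θ₅` and `θ₂∧θ₅`. -/
theorem stmt16 :
    LinearMap.ker d02 ⊓ (LinearMap.range d01)ᗮ
      = Submodule.span ℝ {wdg 0 3, wdg 1 3 + wdg 0 4, wdg 1 4} ∧
    Module.finrank ℝ (LinearMap.ker d02 ⊓ (LinearMap.range d01)ᗮ : Submodule ℝ _) = 3 := by
  have hrange : Set.range ![wdg 0 3, wdg 1 3 + wdg 0 4, wdg 1 4]
      = {wdg 0 3, wdg 1 3 + wdg 0 4, wdg 1 4} := by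
    rw [range_cons, range_cons_cons_empty, Set.singleton_union]
  refine ⟨ker_d02_inf_orthogonal_range_d01_eq_span, ?_⟩
  rw [ker_d02_inf_orthogonal_range_d01_eq_span, ← hrange,
    finrank_span_eq_card linearIndependent_rumin_generators, Fintype.card_fin]
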